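/- arXiv:1706.01546 — 6 statements merged into one kernel-verified Lean document; each statement's English description precedes it below -/
import Mathlib

section
/- Let s > 2 be an integer and let S = { x ∈ ℝ : x = ∑_{n=1}^∞ α_n / s^{α_1 + α_2 + ... + α_n} for some sequence (α_n) with α_n ∈ {1, 2, ..., s-1} for all n }. Then S has Lebesgue measure zero. -/
/-- The set `S` of sums `∑ αₙ / s^(α₁+⋯+αₙ)` over digit sequences with values in `{1,…,s-1}`. -/
def Sset (s : ℕ) : Set ℝ :=
  {x : ℝ | ∃ α : ℕ → ℕ, (∀ n, 1 ≤ α n ∧ α n ≤ s - 1) ∧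
    x = ∑' n : ℕ, (α n : ℝ) / (s : ℝ) ^ (∑ k ∈ Finset.range (n + 1), α k)}

/-!
Splitting off the first digit `a` shows that `S` is covered by the `s - 1` similar copies
`a / s^a + s^(-a) • S`, so `λ(S) ≤ (∑_{a=1}^{s-1} s^(-a)) λ(S)` with a factor `< 1`.
As `S` is bounded, `λ(S)` is finite and therefore zero.
-/

open Finset MeasureTheory Module
open scoped Pointwise ENNReal

lemma ENNReal.eq_zero_of_le_mul_self {a b : ℝ≥0∞} (h : a ≤ b * a) (hb : b < 1) (ha : a ≠ ∞) :
    a = 0 := by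
  by_contra ha0
  have : b * a < 1 * a := ENNReal.mul_lt_mul_left ha0 ha hb
  rw [one_mul] at this
  exact this.not_ge h

theorem MeasureTheory.Measure.addHaar_eq_zero_of_subset_biUnion_vadd_smul
    {E ι : Type*} [NormedAddCommGroup E] [NormedSpace ℝ E] [MeasurableSpace E] [BorelSpace E]
    [FiniteDimensional ℝ E] (μ : Measure E) [μ.IsAddHaarMeasure] {A : Set E} (I : Finset ι)
    (c : ι → E) (r : ι → ℝ) (hA : A ⊆ ⋃ i ∈ I, c i +ᵥ r i • A)
    (hr : ∑ i ∈ I, |r i| ^ finrank ℝ E < 1) (hfin : μ A ≠ ∞) : μ A = 0 := by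
  refine ENNReal.eq_zero_of_le_mul_self ?_ (ENNReal.ofReal_lt_one.2 hr) hfin
  calc μ A ≤ μ (⋃ i ∈ I, c i +ᵥ r i • A) := measure_mono hA
    _ ≤ ∑ i ∈ I, μ (c i +ᵥ r i • A) := measure_biUnion_finset_le _ _
    _ = ∑ i ∈ I, ENNReal.ofReal (|r i| ^ finrank ℝ E) * μ A := by
      simp only [measure_vadd, Measure.addHaar_smul, abs_pow]
    _ = ENNReal.ofReal (∑ i ∈ I, |r i| ^ finrank ℝ E) * μ A := by
      rw [ENNReal.ofReal_sum_of_nonneg fun i _ => by positivity, Finset.sum_mul]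

noncomputable def digitTerm (s : ℕ) (α : ℕ → ℕ) (n : ℕ) : ℝ :=
  α n / (s : ℝ) ^ (∑ k ∈ range (n + 1), α k)

lemma mem_Sset {s : ℕ} {x : ℝ} :
    x ∈ Sset s ↔ ∃ α : ℕ → ℕ, (∀ n, 1 ≤ α n ∧ α n ≤ s - 1) ∧ x = ∑' n, digitTerm s α n :=
  Iff.rfl

lemma digitTerm_nonneg (s : ℕ) (α : ℕ → ℕ) (n : ℕ) : 0 ≤ digitTerm s α n := by
  unfold digitTerm; positivity

lemma digitTerm_zero (s : ℕ) (α : ℕ → ℕ) : digitTerm s α 0 = α 0 / (s : ℝ) ^ α 0 := by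
  simp [digitTerm]

lemma digitTerm_succ (s : ℕ) (α : ℕ → ℕ) (n : ℕ) :
    digitTerm s α (n + 1) = ((s : ℝ) ^ α 0)⁻¹ * digitTerm s (fun k => α (k + 1)) n := by
  rw [digitTerm, digitTerm, sum_range_succ', pow_add]
  ring

lemma digitTerm_le_inv_pow {s : ℕ} {α : ℕ → ℕ} (hs : 1 ≤ s) (hα : ∀ n, 1 ≤ α n ∧ α n ≤ s - 1)
    (n : ℕ) : digitTerm s α n ≤ (s : ℝ)⁻¹ ^ n := by
  have hs₀ : (0 : ℝ) < s := by exact_mod_cast hs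
  have hdigit : (α n : ℝ) ≤ s := by exact_mod_cast (hα n).2.trans (Nat.sub_le s 1)
  have hexp : n + 1 ≤ ∑ k ∈ range (n + 1), α k := by
    simpa using card_nsmul_le_sum (range (n + 1)) α 1 fun k _ => (hα k).1
  calc digitTerm s α n ≤ s / (s : ℝ) ^ (n + 1) :=
        div_le_div₀ hs₀.le hdigit (by positivity) (pow_le_pow_right₀ (by exact_mod_cast hs) hexp)
    _ = (s : ℝ)⁻¹ ^ n := by rw [pow_succ, inv_pow, div_mul_cancel_right₀ hs₀.ne']

lemma summable_digitTerm {s : ℕ} {α : ℕ → ℕ} (hs : 2 ≤ s) (hα : ∀ n, 1 ≤ α n ∧ α n ≤ s - 1) :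
    Summable (digitTerm s α) :=
  .of_nonneg_of_le (digitTerm_nonneg s α) (digitTerm_le_inv_pow (by omega) hα)
    (summable_geometric_of_lt_one (by positivity) (inv_lt_one_of_one_lt₀ (by exact_mod_cast hs)))

lemma tsum_digitTerm_le {s : ℕ} {α : ℕ → ℕ} (hs : 2 ≤ s) (hα : ∀ n, 1 ≤ α n ∧ α n ≤ s - 1) :
    ∑' n, digitTerm s α n ≤ (1 - (s : ℝ)⁻¹)⁻¹ := by
  have hs₁ : (s : ℝ)⁻¹ < 1 := inv_lt_one_of_one_lt₀ (by exact_mod_cast hs)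
  rw [← tsum_geometric_of_lt_one (by positivity) hs₁]
  exact (summable_digitTerm hs hα).tsum_le_tsum (digitTerm_le_inv_pow (by omega) hα)
    (summable_geometric_of_lt_one (by positivity) hs₁)

lemma tsum_digitTerm_eq {s : ℕ} {α : ℕ → ℕ} (h : Summable (digitTerm s α)) :
    ∑' n, digitTerm s α n =
      α 0 / (s : ℝ) ^ α 0 + ((s : ℝ) ^ α 0)⁻¹ * ∑' n, digitTerm s (fun k => α (k + 1)) n := by
  rw [h.tsum_eq_zero_add, digitTerm_zero]
  simp only [digitTerm_succ, tsum_mul_left]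

lemma isBounded_Sset {s : ℕ} (hs : 2 ≤ s) : Bornology.IsBounded (Sset s) := by
  refine (Metric.isBounded_Icc 0 (1 - (s : ℝ)⁻¹)⁻¹).subset ?_
  intro x hx
  obtain ⟨α, hα, rfl⟩ := mem_Sset.1 hx
  exact ⟨tsum_nonneg (digitTerm_nonneg s α), tsum_digitTerm_le hs hα⟩

lemma Sset_subset_biUnion {s : ℕ} (hs : 2 ≤ s) :
    Sset s ⊆ ⋃ a ∈ Icc 1 (s - 1), ((a : ℝ) / (s : ℝ) ^ a) +ᵥ ((s : ℝ) ^ a)⁻¹ • Sset s := by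
  intro x hx
  obtain ⟨α, hα, rfl⟩ := mem_Sset.1 hx
  rw [tsum_digitTerm_eq (summable_digitTerm hs hα)]
  exact Set.mem_biUnion (mem_Icc.2 (hα 0))
    (Set.vadd_mem_vadd_set (Set.smul_mem_smul_set (mem_Sset.2 ⟨_, fun k => hα (k + 1), rfl⟩)))

lemma Sset_eq_empty_of_lt_two {s : ℕ} (hs : s < 2) : Sset s = ∅ :=
  Set.eq_empty_of_forall_notMem fun _ ⟨α, hα, _⟩ => by have := hα 0; omega

lemma sum_Icc_inv_pow_lt_one {s : ℕ} (hs : 2 ≤ s) : ∑ a ∈ Icc 1 (s - 1), ((s : ℝ) ^ a)⁻¹ < 1 := by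
  have hs₀ : (0 : ℝ) < s := by positivity
  calc ∑ a ∈ Icc 1 (s - 1), ((s : ℝ) ^ a)⁻¹ ≤ ∑ a ∈ Icc 1 (s - 1), (s : ℝ)⁻¹ :=
        sum_le_sum fun a ha => inv_anti₀ hs₀
          (le_self_pow₀ (by exact_mod_cast (by omega : 1 ≤ s)) (by grind))
    _ = ((s : ℝ) - 1) / s := by
        rw [sum_const, Nat.card_Icc, Nat.add_sub_cancel, nsmul_eq_mul, Nat.cast_sub (by omega),
          Nat.cast_one, div_eq_mul_inv]
    _ < 1 := by rw [div_lt_one hs₀]; linarith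

theorem stmt1_general (s : ℕ) : MeasureTheory.volume (Sset s) = 0 := by
  rcases lt_or_ge s 2 with hs | hs
  · rw [Sset_eq_empty_of_lt_two hs, measure_empty]
  refine Measure.addHaar_eq_zero_of_subset_biUnion_vadd_smul volume (Icc 1 (s - 1)) _ _
    (Sset_subset_biUnion hs) ?_ (isBounded_Sset hs).measure_lt_top.ne
  simpa [abs_of_pos] using sum_Icc_inv_pow_lt_one hs

/-- For an integer `s > 2`, the set `S` has Lebesgue measure zero. -/
theorem stmt1 (s : ℕ) (hs : 2 < s) : MeasureTheory.volume (Sset s) = 0 :=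
  stmt1_general s
end

section
/- Let s > 2 be an integer and let S = { x ∈ ℝ : x = ∑_{n=1}^∞ α_n / s^{α_1 + ... + α_n}, α_n ∈ {1,...,s-1} }. Then S is uncountable. -/
namespace SsetAux

noncomputable def term (s : ℕ) (α : ℕ → ℕ) (n : ℕ) : ℝ :=
  (α n : ℝ) / (s : ℝ) ^ (∑ k ∈ Finset.range (n + 1), α k)

variable {s : ℕ}

lemma hs1 (hs : 2 < s) : (1 : ℝ) < (s : ℝ) := by exact_mod_cast Nat.lt_of_lt_of_le one_lt_two hs.le
lemma hs0 (hs : 2 < s) : (0 : ℝ) < (s : ℝ) := lt_trans one_pos (hs1 hs)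
lemma hs3 (hs : 2 < s) : (3 : ℝ) ≤ (s : ℝ) := by exact_mod_cast hs

lemma term_nonneg (α : ℕ → ℕ) (n : ℕ) : 0 ≤ term s α n := by
  apply div_nonneg (by positivity)
  positivity

lemma sum_ge (α : ℕ → ℕ) (h1 : ∀ n, 1 ≤ α n) (n : ℕ) :
    n + 1 ≤ ∑ k ∈ Finset.range (n + 1), α k := by
  calc n + 1 = ∑ _k ∈ Finset.range (n + 1), 1 := by simp
  _ ≤ _ := Finset.sum_le_sum fun k _ => h1 k

lemma term_le (hs : 2 < s) (α : ℕ → ℕ) (h1 : ∀ n, 1 ≤ α n) (h2 : ∀ n, α n ≤ 2) (n : ℕ) :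
    term s α n ≤ 2 * ((s : ℝ)⁻¹) ^ (n + 1) := by
  have h0 := hs0 hs
  have hA : (s : ℝ) ^ (n + 1) ≤ (s : ℝ) ^ (∑ k ∈ Finset.range (n + 1), α k) :=
    pow_le_pow_right₀ (hs1 hs).le (sum_ge α h1 n)
  have : term s α n ≤ (2 : ℝ) / (s : ℝ) ^ (n + 1) := by
    unfold term
    apply div_le_div₀ (by norm_num) (by exact_mod_cast h2 n) (by positivity) hA
  calc term s α n ≤ (2 : ℝ) / (s : ℝ) ^ (n + 1) := this
  _ = 2 * ((s : ℝ)⁻¹) ^ (n + 1) := by rw [div_eq_mul_inv, inv_pow]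

lemma summable_term (hs : 2 < s) (α : ℕ → ℕ) (h1 : ∀ n, 1 ≤ α n) (h2 : ∀ n, α n ≤ 2) :
    Summable (term s α) := by
  have hlt : (s : ℝ)⁻¹ < 1 := inv_lt_one_of_one_lt₀ (hs1 hs)
  have h0 : (0 : ℝ) ≤ (s : ℝ)⁻¹ := by positivity
  apply Summable.of_nonneg_of_le (term_nonneg α) (term_le hs α h1 h2)
  apply Summable.mul_left
  exact (summable_geometric_of_lt_one h0 hlt).comp_injective (add_left_injective 1)

lemma sum_split (α : ℕ → ℕ) (n m : ℕ) :
    ∑ k ∈ Finset.range (n + m + 1), α k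
      = (∑ k ∈ Finset.range n, α k) + ∑ k ∈ Finset.range (m + 1), α (n + k) := by
  have : n + m + 1 = n + (m + 1) := by ring
  rw [this, Finset.sum_range_add]

/-- Shift: the tail terms factor through the shifted sequence. -/
lemma term_shift (hs : 2 < s) (α : ℕ → ℕ) (n m : ℕ) :
    term s α (n + m) = ((s : ℝ) ^ (∑ k ∈ Finset.range n, α k))⁻¹ * term s (fun j => α (n + j)) m := by
  unfold term
  rw [sum_split α n m, pow_add]
  rw [div_mul_eq_div_div, inv_mul_eq_div, div_right_comm]

/-- Key upper bound: for digits in {1,2}, the total sum is at most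
`α 0 / s ^ (α 0) + (1/s)^(α 0) / (s - 1)`. -/
lemma tsum_le (hs : 2 < s) (α : ℕ → ℕ) (h1 : ∀ n, 1 ≤ α n) (h2 : ∀ n, α n ≤ 2) :
    ∑' n, term s α n ≤ (α 0 : ℝ) / (s : ℝ) ^ (α 0) + ((s : ℝ)⁻¹) ^ (α 0) / ((s : ℝ) - 1) := by
  have hsum := summable_term hs α h1 h2
  have h0 := hs0 hs
  have hlt : (s : ℝ)⁻¹ < 1 := inv_lt_one_of_one_lt₀ (hs1 hs)
  have hinv0 : (0 : ℝ) ≤ (s : ℝ)⁻¹ := by positivity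
  rw [Summable.tsum_eq_zero_add hsum]
  have hterm0 : term s α 0 = (α 0 : ℝ) / (s : ℝ) ^ (α 0) := by
    unfold term; simp
  -- bound each tail term
  have hA : ∀ m, α 0 + m + α (m + 1) ≤ ∑ k ∈ Finset.range (m + 2), α k := by
    intro m
    rw [Finset.sum_range_succ]
    have : α 0 + m ≤ ∑ k ∈ Finset.range (m + 1), α k := by
      rw [Finset.sum_range_succ']
      have : m ≤ ∑ k ∈ Finset.range m, α (k + 1) := by
        calc m = ∑ _k ∈ Finset.range m, 1 := by simp
        _ ≤ _ := Finset.sum_le_sum fun k _ => h1 (k + 1)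
      omega
    omega
  have hd : ∀ d : ℕ, 1 ≤ d → d ≤ 2 → (d : ℝ) / (s : ℝ) ^ d ≤ (s : ℝ)⁻¹ := by
    intro d hd1 hd2
    interval_cases d
    · simp [one_div]
    · rw [div_le_iff₀ (by positivity)]
      have h0 := hs0 hs
      have : (s:ℝ)⁻¹ * (s:ℝ)^2 = (s:ℝ) := by
        rw [sq]
        field_simp
      rw [this]
      push_cast
      linarith [hs3 hs]
  have htail : ∀ m, term s α (m + 1) ≤ ((s : ℝ)⁻¹) ^ (α 0 + m + 1) := by
    intro m
    unfold term
    have hp : (s : ℝ) ^ (α 0 + m + α (m + 1)) ≤ (s : ℝ) ^ (∑ k ∈ Finset.range (m + 1 + 1), α k) :=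
      pow_le_pow_right₀ (hs1 hs).le (hA m)
    calc (α (m+1) : ℝ) / (s : ℝ) ^ (∑ k ∈ Finset.range (m + 1 + 1), α k)
        ≤ (α (m+1) : ℝ) / (s : ℝ) ^ (α 0 + m + α (m + 1)) := by
          apply div_le_div_of_nonneg_left (by positivity) (by positivity) hp
      _ = ((α (m+1) : ℝ) / (s : ℝ) ^ (α (m+1))) * ((s : ℝ)⁻¹) ^ (α 0 + m) := by
          rw [pow_add, inv_pow, div_mul_eq_div_div, ← div_eq_mul_inv, div_right_comm]
      _ ≤ (s : ℝ)⁻¹ * ((s : ℝ)⁻¹) ^ (α 0 + m) := by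
          apply mul_le_mul_of_nonneg_right (hd _ (h1 _) (h2 _)) (by positivity)
      _ = ((s : ℝ)⁻¹) ^ (α 0 + m + 1) := by ring
  have hgeo : Summable (fun m : ℕ => ((s : ℝ)⁻¹) ^ (α 0 + m + 1)) := by
    have := (summable_geometric_of_lt_one hinv0 hlt).mul_left (((s : ℝ)⁻¹) ^ (α 0 + 1))
    apply this.congr
    intro m
    rw [← pow_add]
    ring_nf
  have : ∑' m, term s α (m + 1) ≤ ∑' m, ((s : ℝ)⁻¹) ^ (α 0 + m + 1) := by
    apply Summable.tsum_le_tsum htail ((summable_nat_add_iff 1).mpr hsum) hgeo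
  have hval : ∑' m : ℕ, ((s : ℝ)⁻¹) ^ (α 0 + m + 1) = ((s : ℝ)⁻¹) ^ (α 0) / ((s : ℝ) - 1) := by
    have : ∀ m : ℕ, ((s : ℝ)⁻¹) ^ (α 0 + m + 1) = ((s : ℝ)⁻¹) ^ (α 0 + 1) * ((s : ℝ)⁻¹) ^ m := by
      intro m; rw [← pow_add]; ring_nf
    rw [tsum_congr this, tsum_mul_left, tsum_geometric_of_lt_one hinv0 hlt]
    rw [pow_add]
    have hs1' : (s : ℝ) - 1 > 0 := by linarith [hs1 hs]
    have h0' : (s : ℝ) ≠ 0 := ne_of_gt h0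
    field_simp
  rw [hterm0]
  linarith [hval ▸ this]

lemma tsum_ge (hs : 2 < s) (α : ℕ → ℕ) (h1 : ∀ n, 1 ≤ α n) (h2 : ∀ n, α n ≤ 2) :
    (α 0 : ℝ) / (s : ℝ) ^ (α 0) ≤ ∑' n, term s α n := by
  have hsum := summable_term hs α h1 h2
  have hterm0 : term s α 0 = (α 0 : ℝ) / (s : ℝ) ^ (α 0) := by unfold term; simp
  calc (α 0 : ℝ) / (s : ℝ) ^ (α 0) = term s α 0 := hterm0.symm
  _ ≤ ∑' n, term s α n := Summable.le_tsum hsum 0 fun m _ => term_nonneg α m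

/-- Key comparison: if two digit sequences in {1,2} agree before `n`,
and `β n = 1`, `γ n = 2`, then the γ-sum is strictly smaller. -/
lemma key (hs : 2 < s) (β γ : ℕ → ℕ) (hβ1 : ∀ n, 1 ≤ β n) (hβ2 : ∀ n, β n ≤ 2)
    (hγ1 : ∀ n, 1 ≤ γ n) (hγ2 : ∀ n, γ n ≤ 2) (n : ℕ)
    (hpre : ∀ k < n, β k = γ k) (hβn : β n = 1) (hγn : γ n = 2) :
    ∑' m, term s γ m < ∑' m, term s β m := by
  have h0 := hs0 hs
  have hsβ := summable_term hs β hβ1 hβ2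
  have hsγ := summable_term hs γ hγ1 hγ2
  -- split both sums at n
  have hsplitβ := Summable.sum_add_tsum_nat_add (f := term s β) n hsβ
  have hsplitγ := Summable.sum_add_tsum_nat_add (f := term s γ) n hsγ
  -- prefixes are equal
  have hpreterm : ∀ k < n, term s β k = term s γ k := by
    intro k hk
    unfold term
    rw [hpre k hk]
    congr 2
    apply Finset.sum_congr rfl
    intro j hj
    exact hpre j (by simp at hj; omega)
  have hprefix : ∑ k ∈ Finset.range n, term s β k = ∑ k ∈ Finset.range n, term s γ k :=
    Finset.sum_congr rfl fun k hk => hpreterm k (Finset.mem_range.mp hk)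
  have hC : ∑ k ∈ Finset.range n, β k = ∑ k ∈ Finset.range n, γ k :=
    Finset.sum_congr rfl fun k hk => hpre k (Finset.mem_range.mp hk)
  set C : ℕ := ∑ k ∈ Finset.range n, β k with hCdef
  -- tails via shifted sequences
  set β' : ℕ → ℕ := fun j => β (n + j) with hβ'def
  set γ' : ℕ → ℕ := fun j => γ (n + j) with hγ'def
  have htailβ : ∑' m, term s β (m + n) = ((s:ℝ) ^ C)⁻¹ * ∑' m, term s β' m := by
    rw [← tsum_mul_left]
    apply tsum_congr
    intro m
    rw [add_comm m n, term_shift hs β n m]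
  have htailγ : ∑' m, term s γ (m + n) = ((s:ℝ) ^ C)⁻¹ * ∑' m, term s γ' m := by
    rw [← tsum_mul_left]
    apply tsum_congr
    intro m
    rw [add_comm m n, term_shift hs γ n m, hC]
  -- bounds on shifted sums
  have hβ'0 : β' 0 = 1 := by simpa [hβ'def] using hβn
  have hγ'0 : γ' 0 = 2 := by simpa [hγ'def] using hγn
  have hlow : (1 : ℝ) / (s:ℝ) ≤ ∑' m, term s β' m := by
    have := tsum_ge hs β' (fun m => hβ1 _) (fun m => hβ2 _)
    rw [hβ'0] at this
    simpa using this
  have hhigh : ∑' m, term s γ' m ≤ (2 : ℝ) / (s:ℝ) ^ 2 + ((s:ℝ)⁻¹) ^ 2 / ((s:ℝ) - 1) := by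
    have := tsum_le hs γ' (fun m => hγ1 _) (fun m => hγ2 _)
    rw [hγ'0] at this
    push_cast at this
    convert this using 2
  have hnum : (2 : ℝ) / (s:ℝ) ^ 2 + ((s:ℝ)⁻¹) ^ 2 / ((s:ℝ) - 1) < 1 / (s:ℝ) := by
    have h3 := hs3 hs
    have hs1' : (0:ℝ) < (s:ℝ) - 1 := by linarith
    rw [div_add_div _ _ (by positivity) (ne_of_gt hs1'), div_lt_div_iff₀ (by positivity) h0, inv_pow]
    have hinv : ((s:ℝ) ^ 2)⁻¹ * ((s:ℝ)^2) = 1 := by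
      field_simp
    nlinarith [sq_nonneg ((s:ℝ) - 3), h0]
  have hstrict : ∑' m, term s γ' m < ∑' m, term s β' m := by
    calc ∑' m, term s γ' m ≤ (2 : ℝ) / (s:ℝ) ^ 2 + ((s:ℝ)⁻¹) ^ 2 / ((s:ℝ) - 1) := hhigh
    _ < 1 / (s:ℝ) := hnum
    _ ≤ ∑' m, term s β' m := hlow
  have hCpos : (0:ℝ) < ((s:ℝ) ^ C)⁻¹ := by positivity
  calc ∑' m, term s γ m = ∑ k ∈ Finset.range n, term s γ k + ∑' m, term s γ (m + n) :=
        hsplitγ.symm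
    _ = ∑ k ∈ Finset.range n, term s β k + ((s:ℝ) ^ C)⁻¹ * ∑' m, term s γ' m := by
        rw [hprefix, htailγ]
    _ < ∑ k ∈ Finset.range n, term s β k + ((s:ℝ) ^ C)⁻¹ * ∑' m, term s β' m := by
        have := mul_lt_mul_of_pos_left hstrict hCpos
        linarith
    _ = ∑ k ∈ Finset.range n, term s β k + ∑' m, term s β (m + n) := by rw [htailβ]
    _ = ∑' m, term s β m := hsplitβ

noncomputable def dig (b : ℕ → Bool) (n : ℕ) : ℕ := if b n then 2 else 1

lemma dig1 (b : ℕ → Bool) (n : ℕ) : 1 ≤ dig b n := by unfold dig; split <;> omega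
lemma dig2 (b : ℕ → Bool) (n : ℕ) : dig b n ≤ 2 := by unfold dig; split <;> omega

noncomputable def f (s : ℕ) (b : ℕ → Bool) : ℝ := ∑' n, term s (dig b) n

lemma f_mem (hs : 2 < s) (b : ℕ → Bool) : f s b ∈ Sset s := by
  refine ⟨dig b, fun n => ⟨dig1 b n, ?_⟩, rfl⟩
  have := dig2 b n
  omega

lemma f_inj (hs : 2 < s) : Function.Injective (f s) := by
  intro b c hbc
  by_contra hne
  have hex : ∃ n, b n ≠ c n := by
    by_contra h
    push_neg at h
    exact hne (funext h)
  classical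
  let n := Nat.find hex
  have hn : b n ≠ c n := Nat.find_spec hex
  have hpre : ∀ k < n, b k = c k := fun k hk => by
    by_contra h
    exact absurd hk (not_lt.mpr (Nat.find_le h))
  have hpre' : ∀ k < n, dig b k = dig c k := fun k hk => by
    unfold dig; rw [hpre k hk]
  cases hb : b n <;> cases hc : c n
  · exact hn (hb.trans hc.symm)
  · -- b n = false (dig = 1), c n = true (dig = 2): f c < f b
    have := key hs (dig b) (dig c) (dig1 b) (dig2 b) (dig1 c) (dig2 c) n hpre'
      (by unfold dig; rw [hb]; rfl) (by unfold dig; rw [hc]; rfl)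
    exact absurd hbc (ne_of_gt this)
  · have := key hs (dig c) (dig b) (dig1 c) (dig2 c) (dig1 b) (dig2 b) n
      (fun k hk => (hpre' k hk).symm)
      (by unfold dig; rw [hc]; rfl) (by unfold dig; rw [hb]; rfl)
    exact absurd hbc (ne_of_lt this)
  · exact hn (hb.trans hc.symm)

end SsetAux

/-- For an integer `s > 2`, the set `S` is uncountable. -/
theorem stmt2 (s : ℕ) (hs : 2 < s) : ¬ (Sset s).Countable := by
  classical
  intro hcount
  have hpre : (SsetAux.f s ⁻¹' Sset s).Countable :=
    hcount.preimage (SsetAux.f_inj hs)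
  have huniv : (SsetAux.f s ⁻¹' Sset s) = Set.univ := by
    ext b
    simp [SsetAux.f_mem hs b]
  rw [huniv, Set.countable_univ_iff] at hpre
  have hinj : Function.Injective (fun (S : Set ℕ) => (fun n => decide (n ∈ S) : ℕ → Bool)) := by
    intro S T hST
    ext n
    have := congrFun hST n
    simpa using this
  have h2 : Countable (Set ℕ) := hinj.countable
  obtain ⟨g, hg⟩ := Countable.exists_injective_nat (Set ℕ)
  exact Function.cantor_injective _ hg
end

section
/- Let s > 2 be an integer and let S = { x : x = ∑_{n=1}^∞ α_n / s^{α_1+...+α_n}, α_n ∈ {1,...,s-1} }. Then S is nowhere dense in ℝ. -/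
open MeasureTheory Set Module

section SelfCovering

variable {E : Type*} [NormedAddCommGroup E] [NormedSpace ℝ E] [MeasurableSpace E] [BorelSpace E]
  [FiniteDimensional ℝ E] (μ : Measure E) [μ.IsAddHaarMeasure]

theorem addHaar_image_add_smul (b : E) {r : ℝ} (hr : 0 ≤ r) (C : Set E) :
    μ ((fun y => b + r • y) '' C) = ENNReal.ofReal (r ^ finrank ℝ E) * μ C := by
  rw [← image_image (b + ·) (r • ·), image_smul, image_add_left, measure_preimage_add,
    Measure.addHaar_smul_of_nonneg μ hr]

theorem measure_eq_zero_of_subset_biUnion_add_smul {ι : Type*} (t : Finset ι) (b : ι → E)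
    {r : ι → ℝ} (hr : ∀ i, 0 ≤ r i) (hsum : ∑ i ∈ t, r i ^ finrank ℝ E < 1) {C : Set E}
    (hC : μ C ≠ ⊤) (hcov : C ⊆ ⋃ i ∈ t, (fun y => b i + r i • y) '' C) : μ C = 0 := by
  by_contra h0
  have : μ C ≤ ENNReal.ofReal (∑ i ∈ t, r i ^ finrank ℝ E) * μ C :=
    calc μ C ≤ ∑ i ∈ t, μ ((fun y => b i + r i • y) '' C) :=
          (measure_mono hcov).trans (measure_biUnion_finset_le _ _)
      _ = ENNReal.ofReal (∑ i ∈ t, r i ^ finrank ℝ E) * μ C := by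
          simp only [addHaar_image_add_smul μ _ (hr _),
            ENNReal.ofReal_sum_of_nonneg (fun i _ => pow_nonneg (hr i) _), Finset.sum_mul]
  have hlt := (ENNReal.mul_lt_mul_iff_left h0 hC).2 (ENNReal.ofReal_lt_one.2 hsum)
  rw [one_mul] at hlt
  exact (this.trans_lt hlt).false

end SelfCovering

theorem closure_subset_biUnion_image_closure {X ι : Type*} [TopologicalSpace X] [T2Space X]
    (t : Finset ι) {f : ι → X → X} (hf : ∀ i, Continuous (f i)) {A : Set X}
    (hA : IsCompact (closure A)) (h : A ⊆ ⋃ i ∈ t, f i '' A) :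
    closure A ⊆ ⋃ i ∈ t, f i '' closure A :=
  closure_minimal (h.trans (biUnion_mono subset_rfl fun _ _ => image_mono subset_closure))
    (isClosed_biUnion_finset fun i _ => (hA.image (hf i)).isClosed)


theorem hasSum_sub_one_mul_inv_pow_succ {x : ℝ} (hx : 1 < x) :
    HasSum (fun n : ℕ => (x - 1) * x⁻¹ ^ (n + 1)) 1 := by
  have hgeom := (hasSum_geometric_of_lt_one (inv_nonneg.2 (zero_le_one.trans hx.le))
    (inv_lt_one_of_one_lt₀ hx)).mul_left ((x - 1) * x⁻¹)
  have hx0 : x ≠ 0 := by positivity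
  have hx1 : x - 1 ≠ 0 := sub_ne_zero.2 hx.ne'
  have hterm : (fun n : ℕ => (x - 1) * x⁻¹ ^ (n + 1)) = fun n => (x - 1) * x⁻¹ * x⁻¹ ^ n := by
    funext n; ring
  have hsum : (x - 1) * x⁻¹ * (1 - x⁻¹)⁻¹ = 1 := by field_simp
  rwa [hsum, ← hterm] at hgeom

namespace Sset

variable {s : ℕ} {α : ℕ → ℕ}

theorem one_lt_of_digits (hα : ∀ n, 1 ≤ α n ∧ α n ≤ s - 1) : (1 : ℝ) < s := by
  exact_mod_cast (by have := hα 0; omega : 1 < s)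

theorem digit_term_le (hα : ∀ n, 1 ≤ α n ∧ α n ≤ s - 1) (n : ℕ) :
    (α n : ℝ) / (s : ℝ) ^ (∑ k ∈ Finset.range (n + 1), α k)
      ≤ (s - 1 : ℝ) * (s : ℝ)⁻¹ ^ (n + 1) := by
  have hs := one_lt_of_digits hα
  have hdigit : (α n : ℝ) ≤ s - 1 := by
    rw [le_sub_iff_add_le]; exact_mod_cast (by have := hα n; omega : α n + 1 ≤ s)
  have hexp : n + 1 ≤ ∑ k ∈ Finset.range (n + 1), α k := by
    simpa using Finset.card_nsmul_le_sum (Finset.range (n + 1)) α 1 fun k _ => (hα k).1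
  rw [div_eq_mul_inv, inv_pow]
  gcongr
  linarith

theorem summable_digit_term (hα : ∀ n, 1 ≤ α n ∧ α n ≤ s - 1) :
    Summable fun n => (α n : ℝ) / (s : ℝ) ^ (∑ k ∈ Finset.range (n + 1), α k) :=
  .of_nonneg_of_le (fun _ => by positivity) (digit_term_le hα)
    (hasSum_sub_one_mul_inv_pow_succ (one_lt_of_digits hα)).summable

theorem subset_Icc (s : ℕ) : Sset s ⊆ Icc 0 1 := by
  rintro x ⟨α, hα, rfl⟩
  exact ⟨tsum_nonneg fun _ => by positivity, hasSum_le (digit_term_le hα)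
    (summable_digit_term hα).hasSum (hasSum_sub_one_mul_inv_pow_succ (one_lt_of_digits hα))⟩

theorem subset_biUnion_image (s : ℕ) :
    Sset s ⊆ ⋃ a ∈ Finset.Icc 1 (s - 1),
      (fun y => (a : ℝ) / (s : ℝ) ^ a + ((s : ℝ) ^ a)⁻¹ * y) '' Sset s := by
  rintro x ⟨α, hα, rfl⟩
  refine mem_iUnion₂.2 ⟨α 0, Finset.mem_Icc.2 (hα 0), _, ⟨(α ·.succ), fun n => hα _, rfl⟩, ?_⟩
  beta_reduce
  rw [(summable_digit_term hα).tsum_eq_zero_add, Finset.sum_range_one, ← tsum_mul_left]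
  congr 1
  refine tsum_congr fun n => ?_
  rw [Finset.sum_range_succ' α (n + 1), pow_add]
  field_simp

theorem sum_inv_pow_lt_one (s : ℕ) : ∑ a ∈ Finset.Icc 1 (s - 1), ((s : ℝ) ^ a)⁻¹ < 1 := by
  rcases Nat.eq_zero_or_pos s with rfl | hs
  · simp
  have hs' : (1 : ℝ) ≤ s := by exact_mod_cast hs
  calc ∑ a ∈ Finset.Icc 1 (s - 1), ((s : ℝ) ^ a)⁻¹
      ≤ (Finset.Icc 1 (s - 1)).card • (s : ℝ)⁻¹ := by
        refine Finset.sum_le_card_nsmul _ _ _ fun a ha => ?_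
        have ha : a ≠ 0 := by have := (Finset.mem_Icc.1 ha).1; omega
        exact inv_anti₀ (by positivity) (le_self_pow₀ hs' ha)
    _ = (s - 1) / s := by
        rw [Nat.card_Icc, Nat.add_sub_cancel, nsmul_eq_mul, Nat.cast_sub hs, Nat.cast_one,
          div_eq_mul_inv]
    _ < 1 := by rw [div_lt_one (by positivity)]; linarith

end Sset

theorem stmt3_general (s : ℕ) : interior (closure (Sset s)) = ∅ := by
  have hK : IsCompact (closure (Sset s)) :=
    (Metric.isBounded_Icc (0 : ℝ) 1 |>.subset (Sset.subset_Icc s)).isCompact_closure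
  have hcov := closure_subset_biUnion_image_closure _ (fun _ => by fun_prop) hK
    (Sset.subset_biUnion_image s)
  refine volume.interior_eq_empty_of_null <|
    measure_eq_zero_of_subset_biUnion_add_smul volume _ _ (fun _ => by positivity) ?_
      hK.measure_lt_top.ne hcov
  simpa only [finrank_self, pow_one] using Sset.sum_inv_pow_lt_one s

/-- For an integer `s > 2`, the set `S` is nowhere dense in `ℝ`. -/
theorem stmt3 (s : ℕ) (hs : 2 < s) : interior (closure (Sset s)) = ∅ :=
  stmt3_general s
end

section
/- Let s > 2 be an integer and let S = { x : x = ∑_{n=1}^∞ α_n / s^{α_1+...+α_n}, α_n ∈ {1,...,s-1} }. Then S is a perfect set: S is closed and has no isolated points. -/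
open Filter Topology Finset

namespace Sset

variable {s : ℕ}

def digits (s : ℕ) : Set (ℕ → ℕ) := Set.univ.pi fun _ => Set.Icc 1 (s - 1)

noncomputable def term (s : ℕ) (α : ℕ → ℕ) (n : ℕ) : ℝ :=
  (α n : ℝ) / (s : ℝ) ^ (∑ k ∈ range (n + 1), α k)

noncomputable def value (s : ℕ) (α : ℕ → ℕ) : ℝ := ∑' n, term s α n

theorem eq_image_value (s : ℕ) : Sset s = value s '' digits s := by
  ext x
  simp only [Sset, digits, value, term, Set.mem_image, Set.mem_univ_pi, Set.mem_Icc]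
  exact exists_congr fun α => and_congr_right fun _ => eq_comm

theorem isCompact_digits (s : ℕ) : IsCompact (digits s) :=
  isCompact_univ_pi fun _ => (Set.finite_Icc _ _).isCompact

theorem continuous_term (s n : ℕ) : Continuous fun α => term s α n := by
  have : Continuous fun α : ℕ → ℕ => (α n, ∑ k ∈ range (n + 1), α k) := by fun_prop
  exact (continuous_of_discreteTopology (f := fun p : ℕ × ℕ => (p.1 : ℝ) / (s : ℝ) ^ p.2)).comp this

theorem term_nonneg (s : ℕ) (α : ℕ → ℕ) (n : ℕ) : 0 ≤ term s α n := by
  unfold term; positivity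

theorem term_le (hs : 0 < s) {α : ℕ → ℕ} (hα : α ∈ digits s) (n : ℕ) :
    term s α n ≤ (1 / s : ℝ) ^ n := by
  have hs' : (1 : ℝ) ≤ s := by exact_mod_cast hs
  have hdigit : (α n : ℝ) ≤ s := by exact_mod_cast ((hα n trivial).2.trans (Nat.sub_le s 1))
  have hexp : n + 1 ≤ ∑ k ∈ range (n + 1), α k := by
    simpa using card_nsmul_le_sum (range (n + 1)) α 1 fun k _ => (hα k trivial).1
  calc term s α n ≤ s / (s : ℝ) ^ (n + 1) :=
        div_le_div₀ (by positivity) hdigit (by positivity) (pow_le_pow_right₀ hs' hexp)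
    _ = (1 / s : ℝ) ^ n := by rw [div_pow, one_pow, pow_succ]; field_simp

theorem summable_one_div_pow (hs : 1 < s) : Summable fun n : ℕ => (1 / s : ℝ) ^ n :=
  summable_geometric_of_lt_one (by positivity) <|
    (div_lt_one (by positivity)).2 (by exact_mod_cast hs)

theorem summable_term (hs : 1 < s) {α : ℕ → ℕ} (hα : α ∈ digits s) : Summable (term s α) :=
  .of_nonneg_of_le (term_nonneg s α) (term_le (by omega) hα) (summable_one_div_pow hs)

theorem continuousOn_value (hs : 1 < s) : ContinuousOn (value s) (digits s) :=
  continuousOn_tsum (fun n => (continuous_term s n).continuousOn)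
    (summable_one_div_pow hs)
    fun n α hα => by rw [Real.norm_of_nonneg (term_nonneg s α n)]; exact term_le (by omega) hα n

theorem term_add (α : ℕ → ℕ) (m N : ℕ) :
    term s α (m + N) = term s (fun k => α (k + N)) m / (s : ℝ) ^ (∑ k ∈ range N, α k) := by
  have hexp : ∑ k ∈ range (m + N + 1), α k =
      ∑ k ∈ range N, α k + ∑ k ∈ range (m + 1), α (k + N) := by
    rw [show m + N + 1 = N + (m + 1) by omega, sum_range_add]
    simp only [add_comm N]
  rw [term, term, hexp, pow_add, div_div, mul_comm]

theorem value_eq_sum_add_tail (hs : 1 < s) {α : ℕ → ℕ} (hα : α ∈ digits s) (N : ℕ) :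
    value s α = ∑ n ∈ range N, term s α n +
      value s (fun k => α (k + N)) / (s : ℝ) ^ (∑ k ∈ range N, α k) := by
  rw [value, ← (summable_term hs hα).sum_add_tsum_nat_add N]
  simp only [term_add, tsum_div_const, value]

theorem value_const (hs : 1 < s) {c : ℕ} (hc : 0 < c) :
    value s (fun _ => c) = c / ((s : ℝ) ^ c - 1) := by
  have hsc : (1 : ℝ) < (s : ℝ) ^ c := one_lt_pow₀ (by exact_mod_cast hs) hc.ne'
  have hterm n : term s (fun _ => c) n = c * ((s : ℝ) ^ c)⁻¹ * (((s : ℝ) ^ c)⁻¹) ^ n := by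
    simp only [term, sum_const, card_range, smul_eq_mul]
    rw [mul_comm, pow_mul, div_eq_mul_inv, ← inv_pow, pow_succ']
    ring
  rw [value, tsum_congr hterm, tsum_mul_left,
    tsum_geometric_of_lt_one (by positivity) (inv_lt_one_of_one_lt₀ hsc)]
  field_simp

theorem exists_value_ne (hs : 2 < s) (x : ℝ) : ∃ δ ∈ digits s, value s δ ≠ x := by
  have hs' : (3 : ℝ) ≤ s := by exact_mod_cast hs
  have h12 : value s (fun _ => 1) ≠ value s (fun _ => 2) := by
    rw [value_const (by omega) one_pos, value_const (by omega) two_pos, Ne,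
      div_eq_div_iff (by norm_num; linarith) (by nlinarith)]
    push_cast
    nlinarith
  by_cases h : value s (fun _ => 1) = x
  · exact ⟨fun _ => 2, fun _ _ => ⟨one_le_two, show 2 ≤ s - 1 by omega⟩, h ▸ h12.symm⟩
  · exact ⟨fun _ => 1, fun _ _ => ⟨le_rfl, show 1 ≤ s - 1 by omega⟩, h⟩

def splice (α δ : ℕ → ℕ) (N : ℕ) : ℕ → ℕ := fun n => if n < N then α n else δ (n - N)

theorem splice_mem_digits {α δ : ℕ → ℕ} (hα : α ∈ digits s) (hδ : δ ∈ digits s) (N : ℕ) :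
    splice α δ N ∈ digits s := fun n _ => by
  unfold splice
  split_ifs
  exacts [hα n trivial, hδ _ trivial]

theorem tendsto_splice (α : ℕ → ℕ) (δ : ℕ → ℕ → ℕ) :
    Tendsto (fun N => splice α (δ N) N) atTop (𝓝 α) :=
  tendsto_pi_nhds.2 fun n =>
    tendsto_atTop_of_eventually_const (i₀ := n + 1) fun _ hN => if_pos (by omega)

theorem value_splice_eq_iff (hs : 1 < s) {α δ : ℕ → ℕ} (hα : α ∈ digits s)
    (hδ : δ ∈ digits s) (N : ℕ) :
    value s (splice α δ N) = value s α ↔ value s δ = value s (fun k => α (k + N)) := by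
  have hprefix : ∀ k < N, splice α δ N k = α k := fun k hk => if_pos hk
  have htail : (fun k => splice α δ N (k + N)) = δ := by
    funext k
    simp [splice]
  have hterm : ∀ n ∈ range N, term s (splice α δ N) n = term s α n := fun n hn => by
    have hn := mem_range.1 hn
    rw [term, term, hprefix n hn,
      sum_congr rfl fun k hk => hprefix k (by rw [mem_range] at hk; omega)]
  rw [value_eq_sum_add_tail hs (splice_mem_digits hα hδ N) N, value_eq_sum_add_tail hs hα N,
    htail, sum_congr rfl hterm, sum_congr rfl fun k hk => hprefix k (mem_range.1 hk),
    add_right_inj, div_left_inj' (by positivity)]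

theorem accPt_value (hs : 2 < s) {α : ℕ → ℕ} (hα : α ∈ digits s) :
    AccPt (value s α) (𝓟 (value s '' digits s)) := by
  choose δ hδ hne using fun N => exists_value_ne hs (value s fun k => α (k + N))
  have hmem N : splice α (δ N) N ∈ digits s := splice_mem_digits hα (hδ N) N
  have hlim : Tendsto (fun N => value s (splice α (δ N) N)) atTop (𝓝 (value s α)) :=
    (continuousOn_value (by omega) α hα).tendsto.comp
      (tendsto_nhdsWithin_iff.2 ⟨tendsto_splice α δ, .of_forall hmem⟩)
  rw [accPt_iff_frequently]
  exact hlim.frequently <| .of_forall fun N =>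
    ⟨mt (value_splice_eq_iff (by omega) hα (hδ N) N).1 (hne N), Set.mem_image_of_mem _ (hmem N)⟩

end Sset

/-- For an integer `s > 2`, the set `S` is perfect: closed with no isolated points. -/
theorem stmt4 (s : ℕ) (hs : 2 < s) :
    IsClosed (Sset s) ∧ ∀ x ∈ Sset s, AccPt x (Filter.principal (Sset s)) := by
  rw [Sset.eq_image_value]
  refine ⟨((Sset.isCompact_digits s).image_of_continuousOn
    (Sset.continuousOn_value (by omega))).isClosed, ?_⟩
  rintro _ ⟨α, hα, rfl⟩
  exact Sset.accPt_value hs hα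
end

section
/- Let s > 2 be an integer, and for a finite tuple (c_1, ..., c_n) of digits from {1,...,s-1}, define the cylinder Δ_{c_1...c_n} = { x : x = ∑_{k=1}^n c_k / s^{c_1+...+c_k} + s^{-(c_1+...+c_n)} · ∑_{i=n+1}^∞ α_i / s^{α_{n+1}+...+α_i}, α_i ∈ {1,...,s-1} }. Then the diameter of Δ_{c_1...c_n c_{n+1}} divided by the diameter of Δ_{c_1...c_n} equals 1 / s^{c_{n+1}}. -/
/-- The cylinder `Δ_{c₁…cₙ}` of rank `n`: the image of `Sset s` under the affine map
`y ↦ ∑_{k=1}^n cₖ/s^(c₁+⋯+cₖ) + s^{-(c₁+⋯+cₙ)} · y`. -/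
def cyl (s n : ℕ) (c : ℕ → ℕ) : Set ℝ :=
  (fun y : ℝ =>
    (∑ k ∈ Finset.range n, (c k : ℝ) / (s : ℝ) ^ (∑ j ∈ Finset.range (k + 1), c j)) +
      ((s : ℝ) ^ (∑ k ∈ Finset.range n, c k))⁻¹ * y) '' Sset s

section aux

variable {s : ℕ} (hs : 2 < s)

lemma Sset_bddAbove (hs : 2 < s) : BddAbove (Sset s) := by
  have hs1 : (1:ℝ) < s := by
    have : (2:ℝ) < s := by exact_mod_cast hs
    linarith
  refine ⟨1, fun x hx => ?_⟩
  obtain ⟨α, hα, rfl⟩ := hx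
  have hterm : ∀ n : ℕ,
      (α n : ℝ) / (s : ℝ) ^ (∑ k ∈ Finset.range (n + 1), α k) ≤ ((s:ℝ)-1) * (1/s)^(n+1) := by
    intro n
    have hsum : n + 1 ≤ ∑ k ∈ Finset.range (n + 1), α k := by
      calc n + 1 = ∑ _k ∈ Finset.range (n+1), 1 := by simp
        _ ≤ ∑ k ∈ Finset.range (n+1), α k := Finset.sum_le_sum fun k _ => (hα k).1
    have hpow : (s:ℝ) ^ (n+1) ≤ (s:ℝ) ^ (∑ k ∈ Finset.range (n + 1), α k) :=
      pow_le_pow_right₀ (le_of_lt hs1) hsum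
    have hpos : (0:ℝ) < (s:ℝ) ^ (n+1) := by positivity
    have hcast : (α n : ℝ) ≤ (s:ℝ) - 1 := by
      have h1 : α n ≤ s - 1 := (hα n).2
      have : (α n : ℝ) ≤ ((s - 1 : ℕ) : ℝ) := by exact_mod_cast h1
      rwa [Nat.cast_sub (by omega), Nat.cast_one] at this
    have hαpos : (0:ℝ) ≤ (α n : ℝ) := by positivity
    calc (α n : ℝ) / (s : ℝ) ^ (∑ k ∈ Finset.range (n + 1), α k)
        ≤ ((s:ℝ)-1) / (s:ℝ) ^ (n+1) :=
          div_le_div₀ (by linarith) hcast hpos hpow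
      _ = ((s:ℝ)-1) * (1/s)^(n+1) := by
          rw [div_pow, one_pow]; ring
  have hgsum : Summable (fun n : ℕ => ((s:ℝ)-1) * (1/s)^(n+1)) := by
    apply Summable.mul_left
    exact (summable_geometric_of_lt_one (by positivity) (by
      rw [div_lt_one (by linarith)]; linarith)).comp_injective (add_left_injective 1)
  have hsummable : Summable (fun n : ℕ =>
      (α n : ℝ) / (s : ℝ) ^ (∑ k ∈ Finset.range (n + 1), α k)) :=
    Summable.of_nonneg_of_le (fun n => by positivity) hterm hgsum
  calc ∑' n : ℕ, (α n : ℝ) / (s : ℝ) ^ (∑ k ∈ Finset.range (n + 1), α k)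
      ≤ ∑' n : ℕ, ((s:ℝ)-1) * (1/s)^(n+1) := Summable.tsum_le_tsum hterm hsummable hgsum
    _ ≤ 1 := by
        have : ∑' n : ℕ, ((s:ℝ)-1) * (1/s)^(n+1) = 1 := by
          have h1 : ∀ n : ℕ, ((s:ℝ)-1) * (1/s)^(n+1) = (((s:ℝ)-1) * (1/s)) * (1/s)^n := by
            intro n; ring
          rw [tsum_congr h1, tsum_mul_left, tsum_geometric_of_lt_one (by positivity)
            (by rw [div_lt_one (by linarith)]; linarith)]
          field_simp
          exact div_self (by linarith)
        linarith [this.le]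

lemma Sset_bddBelow : BddBelow (Sset s) := by
  refine ⟨0, fun x hx => ?_⟩
  obtain ⟨α, hα, rfl⟩ := hx
  exact tsum_nonneg fun n => by positivity

lemma Sset_mem_const (hs : 2 < s) (a : ℕ) (ha1 : 1 ≤ a) (ha : a ≤ s - 1) :
    (a : ℝ) / ((s:ℝ)^a - 1) ∈ Sset s := by
  have hs1 : (1:ℝ) < s := by
    have : (2:ℝ) < s := by exact_mod_cast hs
    linarith
  have hpow1 : (1:ℝ) < (s:ℝ)^a := one_lt_pow₀ hs1 (by omega)
  refine ⟨fun _ => a, fun n => ⟨ha1, ha⟩, ?_⟩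
  set r : ℝ := ((s:ℝ)^a)⁻¹ with hr
  have hr0 : 0 ≤ r := by positivity
  have hr1 : r < 1 := by rw [hr, inv_lt_one_iff₀]; right; exact hpow1
  have hterm : ∀ n : ℕ, (a : ℝ) / (s : ℝ) ^ (∑ k ∈ Finset.range (n + 1), a)
      = ((a:ℝ) * r) * r ^ n := by
    intro n
    rw [Finset.sum_const, Finset.card_range, smul_eq_mul, hr]
    rw [show (n+1) * a = a * (n+1) by ring, pow_mul, div_eq_mul_inv]
    rw [pow_succ', mul_inv]
    ring_nf
  rw [tsum_congr hterm, tsum_mul_left, tsum_geometric_of_lt_one hr0 hr1]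
  have hne : (s:ℝ)^a - 1 ≠ 0 := by linarith
  have hne2 : (s:ℝ)^a ≠ 0 := by positivity
  rw [hr]
  field_simp

lemma Sset_nonempty (hs : 2 < s) : (Sset s).Nonempty :=
  ⟨_, Sset_mem_const hs 1 le_rfl (by omega)⟩

lemma Sset_diam_pos (hs : 2 < s) : 0 < sSup (Sset s) - sInf (Sset s) := by
  have hs1 : (2:ℝ) < s := by exact_mod_cast hs
  have h1 := Sset_mem_const hs 1 le_rfl (by omega)
  have h2 := Sset_mem_const hs 2 one_le_two (by omega)
  rw [Nat.cast_one] at h1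
  push_cast at h2
  have hub := le_csSup (Sset_bddAbove hs) h1
  have hlb := csInf_le Sset_bddBelow h2
  have hlt : (2 : ℝ) / ((s:ℝ)^2 - 1) < (1 : ℝ) / ((s:ℝ)^1 - 1) := by
    rw [div_lt_div_iff₀ (by nlinarith) (by nlinarith)]
    nlinarith
  linarith

lemma isLUB_affine {a r : ℝ} (hr : 0 < r) {S : Set ℝ} {u : ℝ} (h : IsLUB S u) :
    IsLUB ((fun y : ℝ => a + r * y) '' S) (a + r * u) := by
  constructor
  · rintro _ ⟨y, hy, rfl⟩
    have := h.1 hy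
    show a + r * y ≤ a + r * u
    nlinarith
  · intro b hb
    have hu : u ≤ (b - a) / r := by
      apply h.2
      intro y hy
      have := hb ⟨y, hy, rfl⟩
      rw [le_div_iff₀ hr]
      simp only at this
      linarith
    rw [le_div_iff₀ hr] at hu
    linarith

lemma isGLB_affine {a r : ℝ} (hr : 0 < r) {S : Set ℝ} {u : ℝ} (h : IsGLB S u) :
    IsGLB ((fun y : ℝ => a + r * y) '' S) (a + r * u) := by
  constructor
  · rintro _ ⟨y, hy, rfl⟩
    have := h.1 hy
    show a + r * u ≤ a + r * y
    nlinarith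
  · intro b hb
    have hu : (b - a) / r ≤ u := by
      apply h.2
      intro y hy
      have := hb ⟨y, hy, rfl⟩
      rw [div_le_iff₀ hr]
      simp only at this
      linarith
    rw [div_le_iff₀ hr] at hu
    linarith

lemma cyl_diam (hs : 2 < s) (n : ℕ) (c : ℕ → ℕ) :
    sSup (cyl s n c) - sInf (cyl s n c) =
      ((s : ℝ) ^ (∑ k ∈ Finset.range n, c k))⁻¹ * (sSup (Sset s) - sInf (Sset s)) := by
  have hs0 : (0:ℝ) < s := by positivity
  have hr : (0:ℝ) < ((s : ℝ) ^ (∑ k ∈ Finset.range n, c k))⁻¹ := by positivity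
  have hLUB := isLUB_affine (a := ∑ k ∈ Finset.range n,
      (c k : ℝ) / (s : ℝ) ^ (∑ j ∈ Finset.range (k + 1), c j)) hr
    (isLUB_csSup (Sset_nonempty hs) (Sset_bddAbove hs))
  have hGLB := isGLB_affine (a := ∑ k ∈ Finset.range n,
      (c k : ℝ) / (s : ℝ) ^ (∑ j ∈ Finset.range (k + 1), c j)) hr
    (isGLB_csInf (Sset_nonempty hs) Sset_bddBelow)
  have e1 : sSup (cyl s n c) = _ := hLUB.csSup_eq ((Sset_nonempty hs).image _)
  have e2 : sInf (cyl s n c) = _ := hGLB.csInf_eq ((Sset_nonempty hs).image _)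
  rw [e1, e2]
  ring

end aux

/-- Main metric relation: the ratio of diameters of a rank `n+1` cylinder and its parent rank `n`
cylinder equals `1/s^{c_{n+1}}` (indices shifted: `c k` for `k < n+1` are the digits
`c₁,…,c_{n+1}`). The diameter of `A` is `sSup A - sInf A`. -/
theorem stmt5 (s n : ℕ) (hs : 2 < s) (c : ℕ → ℕ)
    (hc : ∀ k < n + 1, 1 ≤ c k ∧ c k ≤ s - 1) :
    (sSup (cyl s (n + 1) c) - sInf (cyl s (n + 1) c)) /
      (sSup (cyl s n c) - sInf (cyl s n c)) = 1 / (s : ℝ) ^ (c n) := by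
  rw [cyl_diam hs, cyl_diam hs]
  have hD := Sset_diam_pos hs
  have hs0 : (0:ℝ) < s := by positivity
  rw [Finset.sum_range_succ, pow_add]
  have h1 : ((s:ℝ) ^ (∑ k ∈ Finset.range n, c k)) ≠ 0 := by positivity
  have h2 : ((s:ℝ) ^ (c n)) ≠ 0 := by positivity
  field_simp
end

section
/- Let s > 2 be an integer and S⁻ = { x : x = ∑_{n=1}^∞ (-1)^n α_n / s^{α_1+...+α_n}, α_n ∈ {1,...,s-1} }. Then inf S⁻ = (−s^{s−1} + s − 1)/(s^s − 1) and sup S⁻ = (−s² + s + 1)/(s^s − 1). -/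
/-- The set `S⁻` of sums `∑ (-1)ⁿ αₙ / s^(α₁+⋯+αₙ)` over digit sequences with values in
`{1,…,s-1}` (the `n`-th term, counting from `1`, carries sign `(-1)ⁿ`). -/
def Sneg (s : ℕ) : Set ℝ :=
  {x : ℝ | ∃ α : ℕ → ℕ, (∀ n, 1 ≤ α n ∧ α n ≤ s - 1) ∧
    x = ∑' n : ℕ, (-1 : ℝ) ^ (n + 1) * (α n : ℝ) / (s : ℝ) ^ (∑ k ∈ Finset.range (n + 1), α k)}

/-!
Splitting off the first digit gives `value α = -(α₀ + value α') / s^α₀` with `α'` the shifted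
sequence, so `S⁻` is invariant under the decreasing maps `T_a x = -(a + x) / s^a`,
`1 ≤ a ≤ s - 1`, each a contraction by at least `1/s`. The two claimed bounds `L`, `U` satisfy
`T₁ U = L` and `T_{s-1} L = U`, and a polynomial inequality shows `T_a U ≥ L` and `T_a L ≤ U`
for every digit `a`; hence an interval `[L - ε, U + ε]` containing all of `S⁻` can be shrunk to
`[L - ε/s, U + ε/s]`, and `S⁻ ⊆ [L, U]`. The alternating sequence `1, s-1, 1, s-1, …` has value
the fixed point of `T₁ ∘ T_{s-1}`, which is `L`, and its shift has value `U`.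
-/

open Finset Filter Topology

namespace Sneg

def IsDigitSeq (s : ℕ) (α : ℕ → ℕ) : Prop := ∀ n, 1 ≤ α n ∧ α n ≤ s - 1

noncomputable def term (s : ℕ) (α : ℕ → ℕ) (n : ℕ) : ℝ :=
  (-1 : ℝ) ^ (n + 1) * (α n : ℝ) / (s : ℝ) ^ (∑ k ∈ range (n + 1), α k)

noncomputable def value (s : ℕ) (α : ℕ → ℕ) : ℝ := ∑' n, term s α n

noncomputable def digitMap (s a : ℕ) (x : ℝ) : ℝ := -(a + x) / (s : ℝ) ^ a

noncomputable def infVal (s : ℕ) : ℝ := (-(s : ℝ) ^ (s - 1) + s - 1) / ((s : ℝ) ^ s - 1)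

noncomputable def supVal (s : ℕ) : ℝ := (-(s : ℝ) ^ 2 + s + 1) / ((s : ℝ) ^ s - 1)

variable {s : ℕ} {α : ℕ → ℕ}

theorem IsDigitSeq.tail (hα : IsDigitSeq s α) : IsDigitSeq s (fun n => α (n + 1)) :=
  fun n => hα (n + 1)

theorem IsDigitSeq.cast_le (hα : IsDigitSeq s α) (n : ℕ) : (α n : ℝ) ≤ s - 1 := by
  have : (α n : ℝ) + 1 ≤ s := by exact_mod_cast (by have := hα n; omega : α n + 1 ≤ s)
  linarith

theorem abs_term_le (hs : 1 < s) (hα : IsDigitSeq s α) (n : ℕ) :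
    |term s α n| ≤ (s - 1) * (s : ℝ)⁻¹ ^ (n + 1) := by
  have hs1 : (1 : ℝ) ≤ s := by exact_mod_cast hs.le
  have hlen : n + 1 ≤ ∑ k ∈ range (n + 1), α k := by
    simpa using card_nsmul_le_sum (range (n + 1)) α 1 fun k _ => (hα k).1
  rw [term, abs_div, abs_mul, abs_pow, abs_neg, abs_one, one_pow, one_mul, Nat.abs_cast,
    abs_of_pos (by positivity), inv_pow, ← div_eq_mul_inv]
  exact div_le_div₀ (by linarith) (hα.cast_le n) (by positivity) (pow_le_pow_right₀ hs1 hlen)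

theorem hasSum_majorant (hs : 1 < s) :
    HasSum (fun n : ℕ => ((s : ℝ) - 1) * (s : ℝ)⁻¹ ^ (n + 1)) 1 := by
  have hs' : (1 : ℝ) < s := by exact_mod_cast hs
  have hgeom := (hasSum_geometric_of_lt_one (by positivity) (inv_lt_one_of_one_lt₀ hs')).mul_left
    (((s : ℝ) - 1) * (s : ℝ)⁻¹)
  have hsum : ((s : ℝ) - 1) * (s : ℝ)⁻¹ * (1 - (s : ℝ)⁻¹)⁻¹ = 1 := by
    have : (s : ℝ) - 1 ≠ 0 := by linarith
    field_simp
  simpa only [hsum, pow_succ', mul_assoc] using hgeom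

theorem summable_term (hs : 1 < s) (hα : IsDigitSeq s α) : Summable (term s α) :=
  .of_norm_bounded (hasSum_majorant hs).summable (abs_term_le hs hα)

theorem abs_value_le_one (hs : 1 < s) (hα : IsDigitSeq s α) : |value s α| ≤ 1 :=
  tsum_of_norm_bounded (f := term s α) (hasSum_majorant hs) (abs_term_le hs hα)

theorem value_eq_digitMap (hs : 1 < s) (hα : IsDigitSeq s α) :
    value s α = digitMap s (α 0) (value s fun n => α (n + 1)) := by
  have hshift (n : ℕ) : term s α (n + 1) = -term s (fun n => α (n + 1)) n / (s : ℝ) ^ α 0 := by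
    rw [term, term, sum_range_succ' _ (n + 1), pow_add, pow_succ]
    ring
  rw [value, (summable_term hs hα).tsum_eq_zero_add, tsum_congr hshift, tsum_div_const, tsum_neg,
    digitMap, value]
  simp only [term, zero_add, pow_one, neg_mul, one_mul, range_one, sum_singleton]
  ring

theorem digitMap_sub_digitMap (a : ℕ) (x y : ℝ) :
    digitMap s a x - digitMap s a y = (y - x) / (s : ℝ) ^ a := by
  rw [digitMap, digitMap]; ring

theorem pow_self_eq (hs : 0 < s) : (s : ℝ) ^ s = s * (s : ℝ) ^ (s - 1) := by
  rw [← pow_succ']; congr 1; omega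

theorem pow_self_sub_one_pos (hs : 1 < s) : 0 < (s : ℝ) ^ s - 1 := by
  have : (1 : ℝ) < s := by exact_mod_cast hs
  linarith [one_lt_pow₀ this (by omega : s ≠ 0)]

theorem digitMap_one_supVal (hs : 1 < s) : digitMap s 1 (supVal s) = infVal s := by
  have hD := (pow_self_sub_one_pos hs).ne'
  rw [digitMap, supVal, infVal, div_eq_div_iff (by positivity) hD]
  field_simp
  rw [pow_self_eq (by omega)]
  ring

theorem digitMap_pred_infVal (hs : 1 < s) : digitMap s (s - 1) (infVal s) = supVal s := by
  have hD := (pow_self_sub_one_pos hs).ne'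
  rw [digitMap, supVal, infVal, div_eq_div_iff (by positivity) hD, Nat.cast_pred (by omega)]
  field_simp
  rw [pow_self_eq (by omega)]
  ring

theorem infVal_mul (hs : 1 < s) :
    infVal s * ((s : ℝ) ^ s - 1) = -(s : ℝ) ^ (s - 1) + s - 1 :=
  div_mul_cancel₀ _ (pow_self_sub_one_pos hs).ne'

theorem supVal_mul (hs : 1 < s) : supVal s * ((s : ℝ) ^ s - 1) = -(s : ℝ) ^ 2 + s + 1 :=
  div_mul_cancel₀ _ (pow_self_sub_one_pos hs).ne'

theorem infVal_le_digitMap_supVal (hs : 2 < s) {a : ℕ} (ha : 1 ≤ a) (ha' : a ≤ s - 1) :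
    infVal s ≤ digitMap s a (supVal s) := by
  obtain rfl | ha := ha.eq_or_lt
  · exact (digitMap_one_supVal (by omega)).ge
  have hs3 : (3 : ℝ) ≤ s := by exact_mod_cast hs
  have hP : (s : ℝ) ^ 2 ≤ (s : ℝ) ^ (s - 1) := pow_le_pow_right₀ (by linarith) (by omega)
  have ht : (s : ℝ) ^ 2 ≤ (s : ℝ) ^ a := pow_le_pow_right₀ (by linarith) ha
  have haR : (a : ℝ) + 1 ≤ s := by exact_mod_cast (by omega : a + 1 ≤ s)
  have hD := pow_self_sub_one_pos (s := s) (by omega)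
  suffices (a + supVal s + infVal s * (s : ℝ) ^ a) * ((s : ℝ) ^ s - 1) ≤ 0 by
    rw [digitMap, le_div_iff₀ (by positivity)]
    linarith [nonpos_of_mul_nonpos_left this hD]
  have hL := infVal_mul (s := s) (by omega)
  have hU := supVal_mul (s := s) (by omega)
  rw [pow_self_eq (by omega)] at hL hU ⊢
  set P := (s : ℝ) ^ (s - 1)
  set t := (s : ℝ) ^ a
  calc (a + supVal s + infVal s * t) * (s * P - 1)
      = a * (s * P - 1) + (-s ^ 2 + s + 1) + t * (-P + s - 1) := by
        linear_combination hU + t * hL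
    _ ≤ 0 := by
        have hsP : (0 : ℝ) ≤ s * P - 1 := by nlinarith
        nlinarith [mul_nonneg (by linarith : (0 : ℝ) ≤ s - 1 - a) hsP,
          mul_nonneg (by linarith : (0 : ℝ) ≤ t - s ^ 2) (by nlinarith : (0 : ℝ) ≤ P - s + 1),
          mul_nonneg (by linarith : (0 : ℝ) ≤ s) (by linarith : (0 : ℝ) ≤ P - s ^ 2)]

theorem digitMap_infVal_le_supVal (hs : 2 < s) {a : ℕ} (ha : 1 ≤ a) (ha' : a ≤ s - 1) :
    digitMap s a (infVal s) ≤ supVal s := by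
  obtain rfl | hlt := ha'.eq_or_lt
  · exact (digitMap_pred_infVal (by omega)).le
  have hs3 : (3 : ℝ) ≤ s := by exact_mod_cast hs
  have ht : (s : ℝ) ^ a ≤ (s : ℝ) ^ (s - 2) := pow_le_pow_right₀ (by linarith) (by omega)
  have haR : (1 : ℝ) ≤ a := by exact_mod_cast ha
  have hD := pow_self_sub_one_pos (s := s) (by omega)
  suffices 0 ≤ (a + infVal s + supVal s * (s : ℝ) ^ a) * ((s : ℝ) ^ s - 1) by
    rw [digitMap, div_le_iff₀ (by positivity)]
    linarith [nonneg_of_mul_nonneg_left this hD]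
  have hL := infVal_mul (s := s) (by omega)
  have hU := supVal_mul (s := s) (by omega)
  have hQ : (s : ℝ) ^ (s - 1) = s * (s : ℝ) ^ (s - 2) := by rw [← pow_succ']; congr 1; omega
  rw [pow_self_eq (by omega), hQ] at hL hU ⊢
  set Q := (s : ℝ) ^ (s - 2)
  set t := (s : ℝ) ^ a
  calc 0 ≤ (a - 1) * (s * (s * Q) - 1) + (Q - t) * (s ^ 2 - s - 1) + Q + s - 2 := by
        have : 1 ≤ Q := one_le_pow₀ (by linarith)
        have hsQ : (0 : ℝ) ≤ s * (s * Q) - 1 := by nlinarith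
        nlinarith [mul_nonneg (by linarith : (0 : ℝ) ≤ a - 1) hsQ,
          mul_nonneg (by linarith : (0 : ℝ) ≤ Q - t) (by nlinarith : (0 : ℝ) ≤ s ^ 2 - s - 1)]
    _ = (a + infVal s + supVal s * t) * (s * (s * Q) - 1) := by
        linear_combination -hL - t * hU

theorem value_mem_Icc_div_of_forall (hs : 2 < s) {ε : ℝ} (hε : 0 ≤ ε)
    (h : ∀ β, IsDigitSeq s β → value s β ∈ Set.Icc (infVal s - ε) (supVal s + ε))
    (hα : IsDigitSeq s α) : value s α ∈ Set.Icc (infVal s - ε / s) (supVal s + ε / s) := by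
  obtain ⟨hlo, hhi⟩ := h _ hα.tail
  have hshrink : ε / (s : ℝ) ^ α 0 ≤ ε / s :=
    div_le_div_of_nonneg_left hε (by positivity)
      (le_self_pow₀ (by exact_mod_cast (by omega : 1 ≤ s)) (by have := (hα 0).1; omega))
  have hmin := infVal_le_digitMap_supVal hs (hα 0).1 (hα 0).2
  have hmax := digitMap_infVal_le_supVal hs (hα 0).1 (hα 0).2
  have hsub_lo := digitMap_sub_digitMap (s := s) (α 0) (value s fun n => α (n + 1)) (supVal s)
  have hsub_hi := digitMap_sub_digitMap (s := s) (α 0) (value s fun n => α (n + 1)) (infVal s)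
  have hpos : (0 : ℝ) < (s : ℝ) ^ α 0 := by positivity
  rw [value_eq_digitMap (by omega) hα]
  constructor
  · have : -(ε / (s : ℝ) ^ α 0) ≤ (supVal s - value s fun n => α (n + 1)) / (s : ℝ) ^ α 0 := by
      rw [← neg_div]; exact div_le_div_of_nonneg_right (by linarith) hpos.le
    linarith
  · have : (infVal s - value s fun n => α (n + 1)) / (s : ℝ) ^ α 0 ≤ ε / (s : ℝ) ^ α 0 :=
      div_le_div_of_nonneg_right (by linarith) hpos.le
    linarith

theorem value_mem_Icc_pow (hs : 2 < s) (N : ℕ) (hα : IsDigitSeq s α) :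
    value s α ∈ Set.Icc (infVal s - (1 + |infVal s| + |supVal s|) * (s : ℝ)⁻¹ ^ N)
      (supVal s + (1 + |infVal s| + |supVal s|) * (s : ℝ)⁻¹ ^ N) := by
  induction N generalizing α with
  | zero =>
    have := abs_le.mp (abs_value_le_one (by omega) hα)
    rw [pow_zero, mul_one]
    constructor <;> linarith [le_abs_self (infVal s), le_abs_self (supVal s),
      neg_abs_le (infVal s), neg_abs_le (supVal s)]
  | succ N ih =>
    rw [pow_succ, ← mul_assoc, ← div_eq_mul_inv]
    exact value_mem_Icc_div_of_forall hs (by positivity) (fun β hβ => ih hβ) hα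

theorem value_mem_Icc (hs : 2 < s) (hα : IsDigitSeq s α) :
    value s α ∈ Set.Icc (infVal s) (supVal s) := by
  have hs' : (1 : ℝ) < s := by exact_mod_cast (by omega : 1 < s)
  have hε := (tendsto_pow_atTop_nhds_zero_of_lt_one (by positivity)
    (inv_lt_one_of_one_lt₀ hs')).const_mul (1 + |infVal s| + |supVal s|)
  rw [mul_zero] at hε
  constructor
  · exact le_of_tendsto' (by simpa using hε.const_sub (infVal s))
      fun N => (value_mem_Icc_pow hs N hα).1
  · exact ge_of_tendsto' (by simpa using hε.const_add (supVal s))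
      fun N => (value_mem_Icc_pow hs N hα).2

def lowSeq (s n : ℕ) : ℕ := if Even n then 1 else s - 1

theorem isDigitSeq_lowSeq (hs : 1 < s) : IsDigitSeq s (lowSeq s) := by
  intro n; unfold lowSeq; split <;> omega

theorem lowSeq_add_two (n : ℕ) : lowSeq s (n + 2) = lowSeq s n := by
  simp [lowSeq, Nat.even_add_one]

theorem value_lowSeq (hs : 1 < s) :
    value s (lowSeq s) = infVal s ∧ value s (fun n => lowSeq s (n + 1)) = supVal s := by
  set x := value s (lowSeq s)
  set y := value s (fun n => lowSeq s (n + 1))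
  have hx : x = digitMap s 1 y := value_eq_digitMap hs (isDigitSeq_lowSeq hs)
  have hy : y = digitMap s (s - 1) x := by
    have h := value_eq_digitMap hs (isDigitSeq_lowSeq hs).tail
    rwa [show lowSeq s (0 + 1) = s - 1 by simp [lowSeq], funext lowSeq_add_two] at h
  have hL := digitMap_one_supVal hs
  have hU := digitMap_pred_infVal hs
  -- `x ↦ digitMap s 1 (digitMap s (s - 1) x)` contracts by the factor `s ^ s` and fixes `infVal s`
  have hfix : (x - infVal s) * (s : ℝ) ^ s = x - infVal s := by
    have h1 := digitMap_sub_digitMap (s := s) 1 y (supVal s)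
    have h2 := digitMap_sub_digitMap (s := s) (s - 1) (infVal s) x
    rw [← hx, hL, pow_one, eq_div_iff (by positivity)] at h1
    rw [← hy, hU, eq_div_iff (by positivity)] at h2
    rw [pow_self_eq (by omega)]
    linear_combination (s : ℝ) ^ (s - 1) * h1 + h2
  have hxL : x = infVal s := by
    have h0 : (x - infVal s) * ((s : ℝ) ^ s - 1) = 0 := by linear_combination hfix
    exact sub_eq_zero.mp ((mul_eq_zero.mp h0).resolve_right (pow_self_sub_one_pos hs).ne')
  exact ⟨hxL, by rw [hy, hxL, hU]⟩

theorem isLeast (hs : 2 < s) : IsLeast (Sneg s) (infVal s) := by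
  refine ⟨⟨lowSeq s, isDigitSeq_lowSeq (by omega), (value_lowSeq (by omega)).1.symm⟩, ?_⟩
  rintro x ⟨α, hα, rfl⟩
  exact (value_mem_Icc hs hα).1

theorem isGreatest (hs : 2 < s) : IsGreatest (Sneg s) (supVal s) := by
  refine ⟨⟨_, (isDigitSeq_lowSeq (by omega)).tail, (value_lowSeq (by omega)).2.symm⟩, ?_⟩
  rintro x ⟨α, hα, rfl⟩
  exact (value_mem_Icc hs hα).2

end Sneg

/-- `inf S⁻ = (-s^{s-1} + s - 1)/(s^s - 1)` and `sup S⁻ = (-s² + s + 1)/(s^s - 1)`. -/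
theorem stmt10 (s : ℕ) (hs : 2 < s) :
    sInf (Sneg s) = (-(s : ℝ) ^ (s - 1) + s - 1) / ((s : ℝ) ^ s - 1) ∧
      sSup (Sneg s) = (-(s : ℝ) ^ 2 + s + 1) / ((s : ℝ) ^ s - 1) :=
  ⟨(Sneg.isLeast hs).csInf_eq, (Sneg.isGreatest hs).csSup_eq⟩
end
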